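/- For all positive integers r and n with r dividing n and n/r ≥ 3, there exists a 2r-regular graph G on n vertices such that, with every vertex assigned threshold r, G has a dynamic monopoly of size r. -/

import Mathlib

/-!
Blow up the cycle `C_q` by replacing each vertex by an independent set of size `r` (a block)
and each edge by a complete bipartite graph. Every vertex then has `2r` neighbours, and once
a block is active, every vertex of an adjacent block sees `r` active neighbours and becomes
active. Since the cycle is connected, the activation spreads from one block to all of them.
-/

open SimpleGraph

/-- One step of the irreversible activation process: every vertex with at least `τ v`
active neighbors becomes active, and active vertices stay active. -/
def activationStep {V : Type*} (G : SimpleGraph V) (τ : V → ℕ) (A : Set V) : Set V :=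
  A ∪ {v | τ v ≤ (G.neighborSet v ∩ A).ncard}

/-- `D` is a dynamic monopoly (dynamo) of `(G, τ)`: iterating the activation process
starting from `D` eventually activates all vertices. -/
def IsDynamo {V : Type*} (G : SimpleGraph V) (τ : V → ℕ) (D : Set V) : Prop :=
  ∃ j : ℕ, (activationStep G τ)^[j] D = Set.univ

/-- `K` is (the vertex set of) a resistant subgraph of `(G, τ)`:
every vertex `v` of `K` satisfies `d_K(v) ≥ d_G(v) − τ(v) + 1` (as integers). -/
def IsResistant {V : Type*} (G : SimpleGraph V) (τ : V → ℕ) (K : Set V) : Prop :=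
  K.Nonempty ∧ ∀ v ∈ K, (G.neighborSet v).ncard + 1 ≤ (G.neighborSet v ∩ K).ncard + τ v

/-- The minimum size of a dynamic monopoly of `(G, τ)`. -/
noncomputable def dyn {V : Type*} (G : SimpleGraph V) (τ : V → ℕ) : ℕ :=
  sInf {k : ℕ | ∃ D : Set V, D.ncard = k ∧ IsDynamo G τ D}

section Activation

variable {V : Type*} (G : SimpleGraph V) (τ : V → ℕ)

theorem subset_activationStep (A : Set V) : A ⊆ activationStep G τ A :=
  Set.subset_union_left

theorem monotone_iterate_activationStep (A : Set V) :
    Monotone fun k => (activationStep G τ)^[k] A :=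
  fun _ _ hkm => Function.monotone_iterate_of_id_le (subset_activationStep G τ) hkm A

theorem mem_activationStep_of_subset [Finite V] {A B : Set V} {v : V}
    (hB : B ⊆ G.neighborSet v ∩ A) (hτ : τ v ≤ B.ncard) : v ∈ activationStep G τ A :=
  Or.inr (hτ.trans (Set.ncard_le_ncard hB))

end Activation

section Comap

variable {V W : Type*} [Finite V] {f : V → W} {r : ℕ}

theorem ncard_preimage_of_ncard_fiber (hf : ∀ w, (f ⁻¹' {w}).ncard = r) {s : Set W}
    (hs : s.Finite) : (f ⁻¹' s).ncard = s.ncard * r := by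
  induction s, hs using Set.Finite.induction_on with
  | empty => simp
  | @insert a s ha hs ih =>
    have hdisj : Disjoint {a} s := Set.disjoint_singleton_left.2 ha
    rw [Set.insert_eq, Set.preimage_union, Set.ncard_union_eq (hdisj.preimage f),
      Set.ncard_union_eq hdisj (Set.toFinite _) hs, hf, ih, Set.ncard_singleton]
    ring

variable {H : SimpleGraph W}

theorem fiber_subset_activationStep_comap (hf : ∀ w, (f ⁻¹' {w}).ncard = r) {u w : W}
    (huw : H.Adj u w) {A : Set V} (hA : f ⁻¹' {u} ⊆ A) :
    f ⁻¹' {w} ⊆ activationStep (H.comap f) (fun _ => r) A := by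
  intro v hv
  refine mem_activationStep_of_subset _ _ (fun x hx => ⟨?_, hA hx⟩) (hf u).ge
  rw [Set.mem_preimage, Set.mem_singleton_iff] at hv hx
  simpa [hv, hx] using huw.symm

theorem fiber_subset_iterate_activationStep_comap (hf : ∀ w, (f ⁻¹' {w}).ncard = r)
    {u w : W} (p : H.Walk u w) {A : Set V} (hA : f ⁻¹' {u} ⊆ A) :
    f ⁻¹' {w} ⊆ (activationStep (H.comap f) (fun _ => r))^[p.length] A := by
  induction p generalizing A with
  | nil => exact hA
  | cons huv _ ih =>
    rw [Walk.length_cons, Function.iterate_succ_apply]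
    exact ih (fiber_subset_activationStep_comap hf huv hA)

theorem isDynamo_comap_fiber [Fintype W] (hH : H.Connected)
    (hf : ∀ w, (f ⁻¹' {w}).ncard = r) (w₀ : W) :
    IsDynamo (H.comap f) (fun _ => r) (f ⁻¹' {w₀}) := by
  classical
  refine ⟨Fintype.card W, Set.eq_univ_of_forall fun v => ?_⟩
  let p := (hH.preconnected w₀ (f v)).some.toPath
  exact monotone_iterate_activationStep _ _ _ p.2.length_lt.le
    (fiber_subset_iterate_activationStep_comap hf p.1 subset_rfl rfl)

end Comap

theorem ncard_preimage_snd_equiv {V α W : Type*} [Finite α] (e : V ≃ α × W) (w : W) :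
    ((fun v => (e v).2) ⁻¹' {w}).ncard = Nat.card α := by
  rw [show (fun v => (e v).2) ⁻¹' {w} = e ⁻¹' (Set.univ ×ˢ {w}) by ext; simp,
    Set.ncard_preimage_of_injective_subset_range e.injective (by simp), Set.ncard_prod,
    Set.ncard_univ, Set.ncard_singleton, mul_one]

theorem ncard_neighborSet_cycleGraph {k : ℕ} (v : Fin (k + 3)) :
    ((cycleGraph (k + 3)).neighborSet v).ncard = 2 := by
  rw [← cycleGraph_degree_three_le (v := v), ← card_neighborSet_eq_degree,
    ← Nat.card_eq_fintype_card, Nat.card_coe_set_eq]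

theorem stmt10_general (r n : ℕ) (hdvd : r ∣ n) (hq : 3 ≤ n / r) :
    ∃ G : SimpleGraph (Fin n),
      (∀ v, (G.neighborSet v).ncard = 2 * r) ∧
      ∃ D : Set (Fin n), D.ncard = r ∧ IsDynamo G (fun _ => r) D := by
  obtain ⟨q, rfl⟩ := hdvd
  have hr : 0 < r := Nat.pos_of_ne_zero (by rintro rfl; simp at hq)
  rw [Nat.mul_div_cancel_left q hr] at hq
  obtain ⟨k, rfl⟩ : ∃ k, q = k + 3 := ⟨q - 3, by omega⟩
  set block : Fin (r * (k + 3)) → Fin (k + 3) := fun v => (finProdFinEquiv.symm v).2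
  have hblock : ∀ c, (block ⁻¹' {c}).ncard = r := fun c =>
    (ncard_preimage_snd_equiv finProdFinEquiv.symm c).trans (Nat.card_fin r)
  refine ⟨(cycleGraph (k + 3)).comap block, fun v => ?_, block ⁻¹' {0}, hblock 0,
    isDynamo_comap_fiber cycleGraph_connected hblock 0⟩
  rw [neighborSet_comap, ncard_preimage_of_ncard_fiber hblock (Set.toFinite _),
    ncard_neighborSet_cycleGraph]

/-- For all positive `r`, `n` with `r ∣ n` and `n/r ≥ 3` there is a `2r`-regular graph on
`n` vertices with constant threshold `r` admitting a dynamic monopoly of size `r`. -/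
theorem stmt10 (r n : ℕ) (hr : 0 < r) (hdvd : r ∣ n) (hq : 3 ≤ n / r) :
    ∃ G : SimpleGraph (Fin n),
      (∀ v, (G.neighborSet v).ncard = 2 * r) ∧
      ∃ D : Set (Fin n), D.ncard = r ∧ IsDynamo G (fun _ => r) D :=
  stmt10_general r n hdvd hq
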